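/- arXiv:1504.03839 — 2 statements merged into one kernel-verified Lean document; each statement's English description precedes it below -/
import Mathlib

section
/- Let k ≥ 2 and n ≥ 2, and let T be a nonnegative, weakly irreducible tensor of order k and dimension n. Suppose ρ ∈ ℝ is an H-eigenvalue of T admitting a strictly positive H-eigenvector. Then for every nonempty proper subset S of {1,…,n}, every H-eigenvalue μ of the principal subtensor T[S] that admits a nonnegative nonzero H-eigenvector satisfies μ < ρ. -/
open Finset

/-- The H-eigenvalue equation: for every `i`,
`Σ_{i_2,…,i_k} T(i,i_2,…,i_k) x_{i_2} ⋯ x_{i_k} = λ x_i^(k-1)`. -/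
def HEigEq {k : ℕ} {ι : Type*} [Fintype ι] [DecidableEq ι] (hk : 0 < k)
    (T : (Fin k → ι) → ℝ) (lam : ℝ) (x : ι → ℝ) : Prop :=
  ∀ i : ι,
    (∑ f : Fin k → ι,
      if f ⟨0, hk⟩ = i then T f * ∏ j ∈ Finset.univ.erase (⟨0, hk⟩ : Fin k), x (f j) else 0)
    = lam * x i ^ (k - 1)

/-!
Rescale the positive eigenvector `z` to the smallest multiple `w = c • z` lying above the
zero extension `y` of `x`. On the contact set `{i | y i = w i}`, which is nonempty and lies
inside `S`, the eigen-equations give `μ yᵢ^(k-1) = (T y)ᵢ ≤ (T w)ᵢ = ρ wᵢ^(k-1)`; weak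
irreducibility provides a contact index `i` where some factor of `(T y)ᵢ` leaves the contact
set, making the inequality strict, so `μ < ρ`.
-/

theorem prod_lt_prod_of_nonneg {α : Type*} {s : Finset α} {f g : α → ℝ}
    (hf : ∀ a ∈ s, 0 ≤ f a) (hfg : ∀ a ∈ s, f a ≤ g a) (hg : ∀ a ∈ s, 0 < g a)
    {a : α} (ha : a ∈ s) (hlt : f a < g a) :
    ∏ b ∈ s, f b < ∏ b ∈ s, g b := by
  classical
  rw [← mul_prod_erase s f ha, ← mul_prod_erase s g ha]
  exact mul_lt_mul_of_lt_of_le_of_nonneg_of_pos hlt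
    (prod_le_prod (fun b hb => hf b (mem_of_mem_erase hb)) fun b hb => hfg b (mem_of_mem_erase hb))
    (hf a ha) (prod_pos fun b hb => hg b (mem_of_mem_erase hb))

section Tensor

variable {k : ℕ} {ι : Type*} [Fintype ι] [DecidableEq ι]

/-- `(T x^(k-1))ᵢ`, the left-hand side of the H-eigenvalue equation. -/
def tensorApply (hk : 0 < k) (T : (Fin k → ι) → ℝ) (x : ι → ℝ) (i : ι) : ℝ :=
  ∑ f : Fin k → ι,
    if f ⟨0, hk⟩ = i then T f * ∏ j ∈ univ.erase (⟨0, hk⟩ : Fin k), x (f j) else 0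

def IsWeaklyIrreducible (hk : 0 < k) (T : (Fin k → ι) → ℝ) : Prop :=
  ∀ I : Finset ι, I.Nonempty → I ≠ univ →
    ∃ i ∈ I, ∃ f : Fin k → ι, f ⟨0, hk⟩ = i ∧ 0 < T f ∧ ∃ j : Fin k, j ≠ ⟨0, hk⟩ ∧ f j ∉ I

theorem heigEq_iff {hk : 0 < k} {T : (Fin k → ι) → ℝ} {lam : ℝ} {x : ι → ℝ} :
    HEigEq hk T lam x ↔ ∀ i, tensorApply hk T x i = lam * x i ^ (k - 1) :=
  Iff.rfl

theorem tensorApply_smul (hk : 0 < k) (T : (Fin k → ι) → ℝ) (c : ℝ) (x : ι → ℝ) (i : ι) :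
    tensorApply hk T (c • x) i = c ^ (k - 1) * tensorApply hk T x i := by
  have hcard : #(univ.erase (⟨0, hk⟩ : Fin k)) = k - 1 := by simp
  simp only [tensorApply, mul_sum, Pi.smul_apply, smul_eq_mul, prod_mul_distrib, prod_const,
    hcard, mul_ite, mul_zero]
  exact sum_congr rfl fun f _ => by split_ifs <;> ring

theorem HEigEq.smul {hk : 0 < k} {T : (Fin k → ι) → ℝ} {lam : ℝ} {x : ι → ℝ}
    (h : HEigEq hk T lam x) (c : ℝ) : HEigEq hk T lam (c • x) := heigEq_iff.mpr fun i => by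
  rw [tensorApply_smul, heigEq_iff.mp h i, Pi.smul_apply, smul_eq_mul, mul_pow]
  ring

theorem tensorApply_lt (hk : 0 < k) {T : (Fin k → ι) → ℝ} (hT : ∀ f, 0 ≤ T f)
    {x y : ι → ℝ} (hx : 0 ≤ x) (hxy : x ≤ y) (hy : ∀ i, 0 < y i) {i : ι}
    {f : Fin k → ι} (hfi : f ⟨0, hk⟩ = i) (hTf : 0 < T f)
    {j : Fin k} (hj : j ≠ ⟨0, hk⟩) (hlt : x (f j) < y (f j)) :
    tensorApply hk T x i < tensorApply hk T y i := by
  refine sum_lt_sum (fun g _ => ?_) ⟨f, mem_univ f, ?_⟩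
  · split_ifs
    · exact mul_le_mul_of_nonneg_left (prod_le_prod (fun _ _ => hx _) fun _ _ => hxy _) (hT g)
    · rfl
  · rw [if_pos hfi, if_pos hfi]
    exact mul_lt_mul_of_pos_left (prod_lt_prod_of_nonneg (fun _ _ => hx _) (fun _ _ => hxy _)
      (fun _ _ => hy _) (mem_erase.mpr ⟨hj, mem_univ j⟩) hlt) hTf

theorem lt_of_heigEq_of_le_of_contact (hk : 0 < k) {T : (Fin k → ι) → ℝ} (hT : ∀ f, 0 ≤ T f)
    (hirr : IsWeaklyIrreducible hk T) {rho mu : ℝ} {w y : ι → ℝ} (hw : ∀ i, 0 < w i)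
    (hrho : HEigEq hk T rho w) (hy : 0 ≤ y) (hyw : y ≤ w)
    (hcontact : ∃ i, y i = w i) (hgap : ∃ i, y i ≠ w i)
    (hmu : ∀ i, y i = w i → tensorApply hk T y i = mu * y i ^ (k - 1)) :
    mu < rho := by
  set J := univ.filter fun i => y i = w i
  obtain ⟨i0, hi0⟩ := hcontact
  obtain ⟨i1, hi1⟩ := hgap
  have hJne : J.Nonempty := ⟨i0, by simp [J, hi0]⟩
  have hJuniv : J ≠ univ := fun h => hi1 (by simpa [J] using (h ▸ mem_univ i1 : i1 ∈ J))
  obtain ⟨i, hiJ, f, hfi, hTf, j, hj, hfj⟩ := hirr J hJne hJuniv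
  have hyi : y i = w i := by simpa [J] using hiJ
  have hlt : y (f j) < w (f j) := lt_of_le_of_ne (hyw _) (by simpa [J] using hfj)
  have key := tensorApply_lt hk hT hy hyw hw hfi hTf hj hlt
  rw [hmu i hyi, heigEq_iff.mp hrho i, hyi] at key
  exact lt_of_mul_lt_mul_right key (pow_pos (hw i) _).le

end Tensor

theorem exists_pos_smul_ge_with_contact {ι : Type*} [Fintype ι] {z y : ι → ℝ}
    (hz : ∀ i, 0 < z i) (hy : 0 ≤ y) (hy0 : y ≠ 0) :
    ∃ c : ℝ, 0 < c ∧ y ≤ c • z ∧ ∃ i, y i = (c • z) i := by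
  obtain ⟨i1, hi1⟩ := Function.ne_iff.mp hy0
  have hne : (univ : Finset ι).Nonempty := ⟨i1, mem_univ _⟩
  obtain ⟨i0, -, hi0⟩ := exists_mem_eq_sup' hne fun i => y i / z i
  refine ⟨univ.sup' hne fun i => y i / z i, ?_, fun i => ?_, i0, ?_⟩
  · exact (div_pos ((hy i1).lt_of_ne' hi1) (hz i1)).trans_le (le_sup' (fun i => y i / z i)
      (mem_univ i1))
  · exact (div_le_iff₀ (hz i)).mp (le_sup' (fun i => y i / z i) (mem_univ i))
  · rw [Pi.smul_apply, smul_eq_mul, hi0, div_mul_cancel₀ _ (hz i0).ne']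

section ZeroExtension

variable {ι : Type*} {S : Finset ι}

theorem extend_val_of_mem (x : S → ℝ) {i : ι} (hi : i ∈ S) :
    Function.extend Subtype.val x 0 i = x ⟨i, hi⟩ :=
  Subtype.val_injective.extend_apply x 0 ⟨i, hi⟩

theorem extend_val_of_notMem (x : S → ℝ) {i : ι} (hi : i ∉ S) :
    Function.extend Subtype.val x 0 i = 0 :=
  Function.extend_apply' _ _ _ fun ⟨a, ha⟩ => hi (ha ▸ a.2)

theorem tensorApply_extend_val {k : ℕ} [Fintype ι] [DecidableEq ι] (hk : 0 < k)
    (T : (Fin k → ι) → ℝ) (x : S → ℝ) {i : ι} (hi : i ∈ S) :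
    tensorApply hk T (Function.extend Subtype.val x 0) i
      = tensorApply hk (fun f : Fin k → S => T fun j => (f j : ι)) x ⟨i, hi⟩ := by
  symm
  refine Fintype.sum_of_injective (fun g j => (g j : ι))
    (fun g g' h => funext fun j => Subtype.ext (congrFun h j)) _ _ (fun f hf => ?_) fun g => ?_
  · obtain ⟨j, hj⟩ : ∃ j, f j ∉ S := by
      by_contra! h
      exact hf ⟨fun j => ⟨f j, h j⟩, rfl⟩
    split_ifs with hf0
    · have hj0 : j ≠ ⟨0, hk⟩ := by rintro rfl; exact hj (hf0 ▸ hi)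
      exact mul_eq_zero_of_right _ (prod_eq_zero (mem_erase.mpr ⟨hj0, mem_univ j⟩)
        (extend_val_of_notMem x hj))
    · rfl
  · simp only [Subtype.ext_iff, Subtype.val_injective.extend_apply]

end ZeroExtension

/-- let `T` be a nonnegative weakly irreducible tensor of order `k ≥ 2` and
dimension `n ≥ 2`, and let `ρ` be an H-eigenvalue of `T` with a strictly positive
H-eigenvector.  Then for every nonempty proper subset `S` of the index set, every
H-eigenvalue `μ` of the principal subtensor `T[S]` admitting a nonnegative nonzero
H-eigenvector satisfies `μ < ρ`. -/
theorem stmt2 (k n : ℕ) (hk : 2 ≤ k)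
    (T : (Fin k → Fin n) → ℝ)
    (hnonneg : ∀ f : Fin k → Fin n, 0 ≤ T f)
    (hirr : ∀ I : Finset (Fin n), I.Nonempty → I ≠ Finset.univ →
      ∃ i ∈ I, ∃ f : Fin k → Fin n, f ⟨0, by omega⟩ = i ∧ 0 < T f ∧
        ∃ j : Fin k, j ≠ (⟨0, by omega⟩ : Fin k) ∧ f j ∉ I)
    (rho : ℝ) (z : Fin n → ℝ) (hz : ∀ i : Fin n, 0 < z i)
    (hrho : HEigEq (show 0 < k by omega) T rho z)
    (S : Finset (Fin n)) (hSne : S ≠ Finset.univ)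
    (mu : ℝ) (x : {i : Fin n // i ∈ S} → ℝ) (hxnn : ∀ i, 0 ≤ x i) (hx0 : x ≠ 0)
    (hmu : HEigEq (show 0 < k by omega)
      (fun f : Fin k → {i : Fin n // i ∈ S} => T (fun j => (f j : Fin n))) mu x) :
    mu < rho := by
  set y := Function.extend Subtype.val x 0
  have hy : 0 ≤ y := fun i => show 0 ≤ y i by
    by_cases hi : i ∈ S
    · exact (extend_val_of_mem x hi).ge.trans' (hxnn _)
    · exact (extend_val_of_notMem x hi).ge
  have hy0 : y ≠ 0 := fun h =>
    hx0 (funext fun i => (extend_val_of_mem x i.2).symm.trans (congrFun h i))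
  obtain ⟨c, hc, hyw, hcontact⟩ := exists_pos_smul_ge_with_contact hz hy hy0
  have hw : ∀ i, 0 < (c • z) i := fun i => mul_pos hc (hz i)
  have hmem : ∀ i, y i = (c • z) i → i ∈ S := fun i hi => by
    by_contra hiS
    exact (hw i).ne' (hi ▸ extend_val_of_notMem x hiS)
  obtain ⟨i1, hi1⟩ : ∃ i, i ∉ S := by
    by_contra! h
    exact hSne (eq_univ_iff_forall.mpr h)
  refine lt_of_heigEq_of_le_of_contact _ hnonneg hirr hw (hrho.smul c) hy hyw hcontact
    ⟨i1, fun h => hi1 (hmem i1 h)⟩ fun i hi => ?_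
  rw [tensorApply_extend_val _ T x (hmem i hi), heigEq_iff.mp hmu, ← extend_val_of_mem x]
end

section
/- Let G be a finite simple graph and let k ≥ 4 be an even integer. Then every eigenvalue of the adjacency matrix A(G) of G is an adjacency H-eigenvalue of the generalized power hypergraph G^{k,k/2}. -/
/-!
Split each entry `y v` of an eigenvector of `A(G)` into `s` real factors of common absolute
value `|y v| ^ (1 / s)`, one of them carrying the sign, and place them on the copies
`(v, 1), …, (v, s)`. At `(v, j)` the hypergraph eigen-equation has right-hand side
`(∏ i ≠ j, x (v, i)) * ∑ u ∼ v, y u = λ * (∏ i ≠ j, x (v, i)) * y v`, and because all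
`x (v, i) ^ 2` agree, `(∏ i ≠ j, x (v, i)) * y v = x (v, j) ^ (2 * s - 1)`.
-/

open Finset

/-- The edge set of the generalized power hypergraph `G^{k, k/2}` (with `s = k/2`):
each edge `{u,v}` of `G` is blown up into the `2s`-set `({u} × Fin s) ∪ ({v} × Fin s)`. -/
def powerEdges {V : Type*} [Fintype V] [DecidableEq V] (G : SimpleGraph V)
    [DecidableRel G.Adj] (s : ℕ) : Finset (Finset (V × Fin s)) :=
  (Finset.univ.filter fun p : V × V => G.Adj p.1 p.2).image
    (fun p => ({p.1} ×ˢ (Finset.univ : Finset (Fin s)))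
        ∪ ({p.2} ×ˢ (Finset.univ : Finset (Fin s))))

/-- `lam` is an adjacency H-eigenvalue of the generalized power hypergraph `G^{k,s}`
(`k = 2s`) with H-eigenvector `x`. -/
def IsAdjHEigPow {V : Type*} [Fintype V] [DecidableEq V] (G : SimpleGraph V)
    [DecidableRel G.Adj] (k s : ℕ) (lam : ℝ) (x : V × Fin s → ℝ) : Prop :=
  x ≠ 0 ∧ ∀ p : V × Fin s,
    lam * x p ^ (k - 1)
      = ∑ e ∈ (powerEdges G s).filter (fun e => p ∈ e), ∏ w ∈ e.erase p, x w

/-- `lam` is a signless Laplacian H-eigenvalue of the generalized power hypergraph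
`G^{k,s}` (`k = 2s`) with H-eigenvector `x`. -/
def IsQHEigPow {V : Type*} [Fintype V] [DecidableEq V] (G : SimpleGraph V)
    [DecidableRel G.Adj] (k s : ℕ) (lam : ℝ) (x : V × Fin s → ℝ) : Prop :=
  x ≠ 0 ∧ ∀ p : V × Fin s,
    lam * x p ^ (k - 1)
      = (((powerEdges G s).filter (fun e => p ∈ e)).card : ℝ) * x p ^ (k - 1)
        + ∑ e ∈ (powerEdges G s).filter (fun e => p ∈ e), ∏ w ∈ e.erase p, x w

theorem prod_erase_mul_prod_of_sq_eq {ι R : Type*} [Fintype ι] [DecidableEq ι] [CommMonoid R]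
    (a : ι → R) (j : ι) (h : ∀ i, a i ^ 2 = a j ^ 2) :
    (∏ i ∈ univ.erase j, a i) * ∏ i, a i = a j ^ (2 * Fintype.card ι - 1) := by
  have hcard : 2 * Fintype.card ι - 1 = 2 * (#(univ.erase j)) + 1 := by
    rw [card_erase_of_mem (mem_univ j), card_univ]
    have := Fintype.card_pos_iff.2 ⟨j⟩
    omega
  calc (∏ i ∈ univ.erase j, a i) * ∏ i, a i
      = (∏ i ∈ univ.erase j, a i ^ 2) * a j := by
        rw [← mul_prod_erase univ a (mem_univ j), prod_pow, sq]
        ac_rfl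
    _ = a j ^ (2 * Fintype.card ι - 1) := by
        rw [prod_congr rfl fun i _ => h i, prod_const, hcard, ← pow_mul, pow_succ]

theorem exists_fin_prod_eq_and_sq_eq (t : ℝ) {n : ℕ} (hn : n ≠ 0) :
    ∃ a : Fin n → ℝ, ∏ i, a i = t ∧ ∀ i j, a i ^ 2 = a j ^ 2 := by
  obtain ⟨m, rfl⟩ := Nat.exists_eq_succ_of_ne_zero hn
  set r := |t| ^ ((m.succ : ℝ)⁻¹)
  have hr : r ^ m.succ = |t| := Real.rpow_inv_natCast_pow (abs_nonneg t) hn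
  refine ⟨Fin.cons (if t < 0 then -r else r) fun _ => r, ?_, ?_⟩
  · rw [Fin.prod_cons, prod_const, card_univ, Fintype.card_fin]
    split_ifs with ht
    · rw [neg_mul, ← pow_succ', hr, abs_of_neg ht, neg_neg]
    · rw [← pow_succ', hr, abs_of_nonneg (not_lt.1 ht)]
  · have hsq : ∀ i, (Fin.cons (if t < 0 then -r else r) fun _ => r : Fin m.succ → ℝ) i ^ 2
        = r ^ 2 := by
      refine Fin.cases ?_ fun i => rfl
      split_ifs <;> simp
    exact fun i j => (hsq i).trans (hsq j).symm

theorem prod_erase_powerEdge {V R : Type*} [DecidableEq V] [CommMonoid R] {s : ℕ}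
    (x : V × Fin s → R) {u v : V} (huv : u ≠ v) (j : Fin s) :
    ∏ w ∈ ({v} ×ˢ univ ∪ {u} ×ˢ univ).erase (v, j), x w
      = (∏ i ∈ univ.erase j, x (v, i)) * ∏ i, x (u, i) := by
  have hu : (v, j) ∉ ({u} ×ˢ univ : Finset (V × Fin s)) := by simpa using huv
  have hv : ({v} ×ˢ univ : Finset (V × Fin s)).erase (v, j)
      = (univ.erase j).map ⟨Prod.mk v, Prod.mk_right_injective v⟩ := by
    rw [singleton_product, map_erase]
    rfl
  rw [erase_union_distrib, erase_eq_of_notMem hu, prod_union, hv, singleton_product,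
    prod_map, prod_map]
  · rfl
  · refine disjoint_left.2 fun w hw hw' => huv ?_
    simp only [mem_erase, mem_product, mem_singleton] at hw hw'
    exact hw'.1.symm.trans hw.2.1

section PowerHypergraph

variable {V : Type*} [Fintype V] [DecidableEq V] (G : SimpleGraph V) [DecidableRel G.Adj]
  {s : ℕ}

theorem filter_mem_powerEdges (v : V) (j : Fin s) :
    (powerEdges G s).filter (fun e => (v, j) ∈ e)
      = (G.neighborFinset v).image fun u => {v} ×ˢ univ ∪ {u} ×ˢ univ := by
  ext e
  simp only [powerEdges, mem_filter, mem_image, mem_univ, true_and,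
    SimpleGraph.mem_neighborFinset]
  constructor
  · rintro ⟨⟨⟨a, b⟩, hab, rfl⟩, hp⟩
    simp only [mem_union, mem_product, mem_singleton, mem_univ, and_true] at hp
    rcases hp with rfl | rfl
    · exact ⟨b, hab, rfl⟩
    · exact ⟨a, hab.symm, union_comm _ _⟩
  · rintro ⟨u, hu, rfl⟩
    exact ⟨⟨(v, u), hu, rfl⟩, by simp⟩

theorem injOn_neighborFinset_powerEdge (v : V) (j : Fin s) :
    Set.InjOn (fun u => ({v} ×ˢ univ ∪ {u} ×ˢ univ : Finset (V × Fin s)))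
      (G.neighborFinset v) := by
  intro u₁ hu₁ u₂ _ he
  have hmem : (u₁, j) ∈ ({v} ×ˢ univ ∪ {u₂} ×ˢ univ : Finset (V × Fin s)) := by
    simp only at he
    rw [← he]
    simp
  simp only [mem_union, mem_product, mem_singleton, mem_univ, and_true] at hmem
  exact hmem.resolve_left (G.ne_of_adj ((G.mem_neighborFinset v u₁).1 hu₁)).symm

theorem sum_filter_mem_powerEdges {R : Type*} [CommSemiring R] (x : V × Fin s → R)
    (v : V) (j : Fin s) :
    ∑ e ∈ (powerEdges G s).filter (fun e => (v, j) ∈ e), ∏ w ∈ e.erase (v, j), x w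
      = (∏ i ∈ univ.erase j, x (v, i)) * ∑ u ∈ G.neighborFinset v, ∏ i, x (u, i) := by
  rw [filter_mem_powerEdges, sum_image (injOn_neighborFinset_powerEdge G v j), mul_sum]
  refine sum_congr rfl fun u hu => prod_erase_powerEdge x ?_ j
  exact (G.ne_of_adj ((G.mem_neighborFinset v u).1 hu)).symm

theorem isAdjHEigPow_of_prod_eq (hs : s ≠ 0) {lam : ℝ} {y : V → ℝ} (hy0 : y ≠ 0)
    (hy : (G.adjMatrix ℝ).mulVec y = lam • y) (x : V × Fin s → ℝ)
    (hprod : ∀ v, ∏ i, x (v, i) = y v) (hsq : ∀ v i j, x (v, i) ^ 2 = x (v, j) ^ 2) :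
    IsAdjHEigPow G (2 * s) s lam x := by
  refine ⟨?_, ?_⟩
  · rintro rfl
    refine hy0 (funext fun v => ?_)
    rw [← hprod v]
    simp [zero_pow hs]
  · rintro ⟨v, j⟩
    have hneighbors : ∑ u ∈ G.neighborFinset v, y u = lam * y v := by
      simpa [SimpleGraph.adjMatrix_mulVec_apply] using congrFun hy v
    calc lam * x (v, j) ^ (2 * s - 1)
        = lam * ((∏ i ∈ univ.erase j, x (v, i)) * ∏ i, x (v, i)) := by
          rw [prod_erase_mul_prod_of_sq_eq _ j fun i => hsq v i j, Fintype.card_fin]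
      _ = (∏ i ∈ univ.erase j, x (v, i)) * ∑ u ∈ G.neighborFinset v, y u := by
          rw [hneighbors, hprod]
          ring
      _ = _ := by
          simp only [← hprod, sum_filter_mem_powerEdges]

end PowerHypergraph

/-- every eigenvalue of the adjacency matrix `A(G)` of a finite simple graph
`G` is an adjacency H-eigenvalue of the generalized power hypergraph `G^{k,k/2}`. -/
theorem stmt11 {V : Type*} [Fintype V] [DecidableEq V] (G : SimpleGraph V)
    [DecidableRel G.Adj] (k s : ℕ) (hk : 4 ≤ k) (hks : k = 2 * s)
    (lam : ℝ)
    (hlam : ∃ y : V → ℝ, y ≠ 0 ∧ (G.adjMatrix ℝ).mulVec y = lam • y) :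
    ∃ x : V × Fin s → ℝ, IsAdjHEigPow G k s lam x := by
  obtain ⟨y, hy0, hy⟩ := hlam
  have hs : s ≠ 0 := by omega
  choose a ha using fun v => exists_fin_prod_eq_and_sq_eq (y v) hs
  subst hks
  exact ⟨fun p => a p.1 p.2,
    isAdjHEigPow_of_prod_eq G hs hy0 hy _ (fun v => (ha v).1) fun v => (ha v).2⟩
end
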